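/- Let 0 < b < a and n > a+b. Let A ⊆ C([n],a) and B ⊆ C([n],b) be cross-intersecting families, and suppose |B| ≥ C(n−j, b−j) for some integer j ∈ [b]. Then |A| + |B| ≤ C(n,a) + C(n−j, b−j) − C(n−j, a). Moreover, if |B| > C(n−j, b−j), then this inequality is strict unless b = a−1, j = 1 and |B| = C(n,b). -/

import Mathlib

/-- Two families are cross-intersecting if every member of the first intersects
every member of the second. -/
def CrossIntersecting (A B : Finset (Finset ℕ)) : Prop :=
  ∀ X ∈ A, ∀ Y ∈ B, (X ∩ Y).Nonempty

/-!
Identify `[n]` with `Fin n`. A member of `A` cannot lie inside the complement of a member of `B`,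
so `A` avoids the `(n - b - a)`-fold shadow `∂` of the family `Bᶜ` of `(n - b)`-sets, whence
`|A| ≤ C(n, a) - |∂|`. Write `|B| = C(K, n - b) + m` with `K` maximal. By Kruskal–Katona, `∂` is at
least as large as for the colex initial segment of size `|B|`, which gives `|∂| ≥ C(K, a) + m`, and
`|∂| > C(K, a) + m` when `m > 0`: the initial segment then has a second block, and a strict local
LYM inequality shows that this block has more sets in its shadow than members. Finally,
`K ↦ C(K, n - b) - C(K, a)` is decreasing on `[n - b, n]`, and strictly so except for the last step
when `a = b + 1`; comparing `K` with `n - j` gives both the bound and its strict form.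
-/

open Finset FinsetFamily Finset.Colex

namespace Nat

theorem choose_lt_choose_succ {m k : ℕ} (h : 2 * k + 2 ≤ m) : m.choose k < m.choose (k + 1) := by
  have hpos : 0 < m.choose k := choose_pos (by omega)
  have key : m.choose (k + 1) * (k + 1) = m.choose k * (m - k) := choose_succ_right_eq m k
  have : m.choose k * (k + 1) < m.choose k * (m - k) := Nat.mul_lt_mul_of_pos_left (by omega) hpos
  exact Nat.lt_of_mul_lt_mul_right (key ▸ this)

theorem choose_strictMonoOn (m : ℕ) : StrictMonoOn m.choose (Set.Iic (m / 2)) :=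
  strictMonoOn_of_lt_add_one Set.ordConnected_Iic fun k _ _ hk ↦
    choose_lt_choose_succ (by simp only [Set.mem_Iic] at hk; omega)

theorem choose_lt_choose_of_lt_of_add_lt {m x y : ℕ} (hxy : x < y) (h : x + y < m) :
    m.choose x < m.choose y := by
  rcases le_total (2 * y) m with hy | hy
  · exact choose_strictMonoOn m (by simp only [Set.mem_Iic]; omega)
      (by simp only [Set.mem_Iic]; omega) hxy
  · rw [← choose_symm (by omega : y ≤ m)]
    exact choose_strictMonoOn m (by simp only [Set.mem_Iic]; omega)
      (by simp only [Set.mem_Iic]; omega) (by omega)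

theorem choose_le_choose_of_le_of_add_le {m x y : ℕ} (hxy : x ≤ y) (h : x + y ≤ m) :
    m.choose x ≤ m.choose y := by
  rcases hxy.lt_or_eq with hxy | rfl
  · rcases h.lt_or_eq with h | h
    · exact (choose_lt_choose_of_lt_of_add_lt hxy h).le
    · rw [← h, choose_symm_add]
  · rfl

theorem exists_choose_le_lt_choose_succ {n r k β : ℕ} (hkn : k ≤ n) (hk : k.choose r ≤ β) :
    ∃ K, k ≤ K ∧ K ≤ n ∧ K.choose r ≤ β ∧ (K < n → β < (K + 1).choose r) :=
  ⟨Nat.findGreatest (fun κ ↦ κ.choose r ≤ β) n, Nat.le_findGreatest hkn hk,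
    Nat.findGreatest_le n, Nat.findGreatest_spec (P := fun κ ↦ κ.choose r ≤ β) hkn hk,
    fun h ↦ not_le.1 (Nat.findGreatest_is_greatest (P := fun κ ↦ κ.choose r ≤ β)
      (Nat.lt_succ_self _) h)⟩

end Nat

section ChooseSubChoose

variable {r s κ : ℕ}

theorem choose_sub_choose_succ_eq (hr : 0 < r) (hs : 0 < s) :
    (((κ + 1).choose r : ℤ) - (κ + 1).choose s) =
      (κ.choose r : ℤ) - κ.choose s + κ.choose (r - 1) - κ.choose (s - 1) := by
  obtain ⟨r, rfl⟩ := Nat.exists_eq_add_one_of_ne_zero hr.ne'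
  obtain ⟨s, rfl⟩ := Nat.exists_eq_add_one_of_ne_zero hs.ne'
  simp only [Nat.choose_succ_succ', Nat.add_sub_cancel]
  push_cast
  ring

theorem choose_sub_choose_succ_le (hsr : s ≤ r) (hrκ : r ≤ κ) (hκ : κ + 2 ≤ r + s) :
    (((κ + 1).choose r : ℤ) - (κ + 1).choose s) ≤ κ.choose r - κ.choose s := by
  have h : κ.choose (r - 1) ≤ κ.choose (s - 1) := by
    rw [← Nat.choose_symm (by omega : r - 1 ≤ κ)]
    exact Nat.choose_le_choose_of_le_of_add_le (by omega) (by omega)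
  rw [choose_sub_choose_succ_eq (by omega) (by omega)]
  linarith

theorem choose_sub_choose_succ_lt (hsr : s < r) (hrκ : r ≤ κ) (hκ : κ + 3 ≤ r + s) :
    (((κ + 1).choose r : ℤ) - (κ + 1).choose s) < κ.choose r - κ.choose s := by
  have h : κ.choose (r - 1) < κ.choose (s - 1) := by
    rw [← Nat.choose_symm (by omega : r - 1 ≤ κ)]
    exact Nat.choose_lt_choose_of_lt_of_add_lt (by omega) (by omega)
  rw [choose_sub_choose_succ_eq (by omega) (by omega)]
  linarith

theorem antitoneOn_choose_sub_choose (hsr : s ≤ r) :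
    AntitoneOn (fun κ : ℕ ↦ (κ.choose r : ℤ) - κ.choose s) (Set.Icc r (r + s - 1)) :=
  antitoneOn_of_add_one_le Set.ordConnected_Icc fun κ _ hκ hκ1 ↦
    choose_sub_choose_succ_le hsr hκ.1 (by have := hκ1.2; omega)

theorem choose_sub_choose_lt_of_lt {k K : ℕ} (hsr : s < r) (hrk : r ≤ k) (hkK : k < K)
    (hK : K + 1 ≤ r + s) (hk : k + 3 ≤ r + s) :
    (K.choose r : ℤ) - K.choose s < k.choose r - k.choose s :=
  (antitoneOn_choose_sub_choose hsr.le ⟨by omega, by omega⟩ ⟨by omega, by omega⟩ hkK).trans_lt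
    (choose_sub_choose_succ_lt hsr hrk hk)

end ChooseSubChoose

section LocalLYM

variable {α : Type*} [DecidableEq α] {G : Finset α} {ρ t : ℕ} {ℳ : Finset (Finset α)}

theorem exists_card_sdiff_eq_one_of_mem_of_notMem (hℳ : ℳ ⊆ powersetCard ρ G) {P Q : Finset α}
    (hP : P ∈ ℳ) (hQ : Q ∈ powersetCard ρ G) (hQℳ : Q ∉ ℳ) :
    ∃ P ∈ ℳ, ∃ Q ∈ powersetCard ρ G, Q ∉ ℳ ∧ #(P \ Q) = 1 := by
  induction hd : #(P \ Q) using Nat.strong_induction_on generalizing Q with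
  | _ d ih =>
    obtain ⟨hPG, hPρ⟩ := mem_powersetCard.1 (hℳ hP)
    obtain ⟨hQG, hQρ⟩ := mem_powersetCard.1 hQ
    have hsymm : #(Q \ P) = d := hd ▸ card_sdiff_comm (hQρ.trans hPρ.symm)
    have hd0 : d ≠ 0 := by
      rintro rfl
      rw [card_eq_zero, sdiff_eq_empty_iff_subset] at hd
      exact hQℳ (eq_of_subset_of_card_le hd (by omega) ▸ hP)
    rcases (Nat.one_le_iff_ne_zero.2 hd0).eq_or_lt with rfl | hd1
    · exact ⟨P, hP, Q, hQ, hQℳ, hd⟩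
    obtain ⟨x, hx⟩ : (P \ Q).Nonempty := card_pos.1 (by omega)
    obtain ⟨y, hy⟩ : (Q \ P).Nonempty := card_pos.1 (by omega)
    rw [mem_sdiff] at hx hy
    set Q' := insert x (Q.erase y)
    have hQ' : Q' ∈ powersetCard ρ G := by
      refine mem_powersetCard.2 ⟨insert_subset (hPG hx.1) ((erase_subset _ _).trans hQG), ?_⟩
      rw [card_insert_of_notMem (fun h ↦ hx.2 (mem_of_mem_erase h)), card_erase_of_mem hy.1]
      have := card_pos.2 ⟨y, hy.1⟩
      omega
    by_cases hQ'ℳ : Q' ∈ ℳ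
    · refine ⟨Q', hQ'ℳ, Q, hQ, hQℳ, ?_⟩
      rw [show Q' \ Q = {x} by ext z; aesop, card_singleton]
    · refine ih (d - 1) (by omega) hQ' hQ'ℳ ?_
      rw [show P \ Q' = (P \ Q).erase x by ext z; aesop, card_erase_of_mem (mem_sdiff.2 hx), hd]

theorem filter_subset_shadow_iterate_eq_powersetCard (hℳ : (ℳ : Set (Finset α)).Sized ρ)
    (htρ : t ≤ ρ) {R : Finset α} (hR : R ∈ ℳ) :
    {T ∈ ∂^[t] ℳ | T ⊆ R} = powersetCard (ρ - t) R := by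
  ext T
  simp only [mem_filter, mem_powersetCard]
  refine ⟨fun ⟨hT, hTR⟩ ↦ ⟨hTR, hℳ.shadow_iterate hT⟩, fun ⟨hTR, hTc⟩ ↦ ⟨?_, hTR⟩⟩
  rw [mem_shadow_iterate_iff_exists_sdiff]
  exact ⟨R, hR, hTR, by rw [card_sdiff_of_subset hTR, hℳ hR, hTc]; omega⟩

theorem card_mul_choose_eq_sum_card_filter_superset (hℳ : (ℳ : Set (Finset α)).Sized ρ)
    (htρ : t ≤ ρ) : #ℳ * ρ.choose t = ∑ T ∈ ∂^[t] ℳ, #{R ∈ ℳ | T ⊆ R} := by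
  have := sum_card_bipartiteAbove_eq_sum_card_bipartiteBelow (s := ∂^[t] ℳ) (t := ℳ)
    (fun T R ↦ T ⊆ R)
  simp only [bipartiteAbove, bipartiteBelow] at this
  rw [this, ← smul_eq_mul, ← sum_const]
  refine sum_congr rfl fun R hR ↦ ?_
  rw [filter_subset_shadow_iterate_eq_powersetCard hℳ htρ hR, card_powersetCard, hℳ hR,
    Nat.choose_symm htρ]

theorem card_filter_powersetCard_superset_of_mem_shadow_iterate (hℳ : ℳ ⊆ powersetCard ρ G)
    (htρ : t ≤ ρ) {T : Finset α} (hT : T ∈ ∂^[t] ℳ) :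
    #{R ∈ powersetCard ρ G | T ⊆ R} = (#G - (ρ - t)).choose t := by
  obtain ⟨R, hR, hTR, -⟩ := mem_shadow_iterate_iff_exists_sdiff.1 hT
  have hTρ := ((Set.sized_powersetCard G ρ).mono (coe_subset.2 hℳ)).shadow_iterate hT
  rw [card_filter_powersetCard_subset _ _ _ (hTR.trans (mem_powersetCard.1 (hℳ hR)).1)
    (by omega), hTρ, Nat.sub_sub_self htρ]

/-- Double counting of the pairs `T ⊆ R` only gives `≤`; strictness comes from a pair `P ∈ ℳ`,
`Q ∉ ℳ` with `#(P \ Q) = 1`, since a `(ρ - t)`-subset of `P ∩ Q` misses its superset `Q`. -/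
theorem card_lt_card_shadow_iterate (hℳ : ℳ ⊂ powersetCard ρ G) (hne : ℳ.Nonempty) (ht : 0 < t)
    (htρ : t ≤ ρ) (hG : #G + t ≤ 2 * ρ) : #ℳ < #(∂^[t] ℳ) := by
  have hsized : (ℳ : Set (Finset α)).Sized ρ := fun R hR ↦ (mem_powersetCard.1 (hℳ.subset hR)).2
  obtain ⟨P₀, hP₀⟩ := hne
  obtain ⟨Q₀, hQ₀, hQ₀ℳ⟩ := exists_of_ssubset hℳ
  obtain ⟨P, hP, Q, hQ, hQℳ, hPQ⟩ :=
    exists_card_sdiff_eq_one_of_mem_of_notMem hℳ.subset hP₀ hQ₀ hQ₀ℳ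
  have hPQ' : ρ - t ≤ #(P ∩ Q) := by
    have := card_sdiff_add_card_inter P Q
    rw [hPQ, hsized hP] at this
    omega
  obtain ⟨T₀, hT₀PQ, hT₀⟩ := exists_subset_card_eq hPQ'
  have hT₀ : T₀ ∈ ∂^[t] ℳ := by
    have hT₀P := hT₀PQ.trans inter_subset_left
    rw [mem_shadow_iterate_iff_exists_sdiff]
    exact ⟨P, hP, hT₀P, by rw [card_sdiff_of_subset hT₀P, hsized hP, hT₀]; omega⟩
  set D := (#G - (ρ - t)).choose t
  have hfull := fun T (hT : T ∈ ∂^[t] ℳ) ↦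
    card_filter_powersetCard_superset_of_mem_shadow_iterate hℳ.subset htρ hT
  have hdeg : ∀ T ∈ ∂^[t] ℳ, #{R ∈ ℳ | T ⊆ R} ≤ D := fun T hT ↦
    (card_le_card (filter_subset_filter _ hℳ.subset)).trans_eq (hfull T hT)
  have hdeg₀ : #{R ∈ ℳ | T₀ ⊆ R} < D := by
    refine (card_lt_card ⟨filter_subset_filter _ hℳ.subset, fun h ↦ hQℳ ?_⟩).trans_eq
      (hfull T₀ hT₀)
    exact (mem_filter.1 (h (mem_filter.2 ⟨hQ, hT₀PQ.trans inter_subset_right⟩))).1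
  have hD : D ≤ ρ.choose t := Nat.choose_le_choose t (by omega)
  have : #ℳ * ρ.choose t < #(∂^[t] ℳ) * ρ.choose t :=
    calc #ℳ * ρ.choose t = ∑ T ∈ ∂^[t] ℳ, #{R ∈ ℳ | T ⊆ R} :=
          card_mul_choose_eq_sum_card_filter_superset hsized htρ
      _ < ∑ _T ∈ ∂^[t] ℳ, D := sum_lt_sum hdeg ⟨T₀, hT₀, hdeg₀⟩
      _ ≤ #(∂^[t] ℳ) * ρ.choose t := by rw [sum_const, smul_eq_mul]; gcongr
  exact Nat.lt_of_mul_lt_mul_right this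

end LocalLYM

section Subfamily

variable {α : Type*} [DecidableEq α]

theorem card_shadow_iterate_nonMemberSubfamily_add_card_shadow_iterate_memberSubfamily_le
    (a : α) (𝒜 : Finset (Finset α)) (t : ℕ) :
    #(∂^[t] (𝒜.nonMemberSubfamily a)) + #(∂^[t] (𝒜.memberSubfamily a)) ≤ #(∂^[t] 𝒜) := by
  have hnotMem (ℬ : Finset (Finset α)) (hℬ : ∀ S ∈ ℬ, a ∉ S) : ∀ T ∈ ∂^[t] ℬ, a ∉ T := by
    intro T hT haT
    obtain ⟨S, hS, hTS, -⟩ := mem_shadow_iterate_iff_exists_sdiff.1 hT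
    exact hℬ S hS (hTS haT)
  have hmem := hnotMem (𝒜.memberSubfamily a) fun S hS ↦ (mem_memberSubfamily.1 hS).2
  have hnon := hnotMem (𝒜.nonMemberSubfamily a) fun S hS ↦ (mem_nonMemberSubfamily.1 hS).2
  set 𝒩 := ∂^[t] (𝒜.nonMemberSubfamily a)
  set ℳ := ∂^[t] (𝒜.memberSubfamily a)
  have hdisj : Disjoint 𝒩 (ℳ.image (insert a)) := by
    refine disjoint_left.2 fun T hT hT' ↦ ?_
    obtain ⟨T', -, rfl⟩ := mem_image.1 hT'
    exact hnon _ hT (mem_insert_self a T')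
  have hsub : 𝒩 ∪ ℳ.image (insert a) ⊆ ∂^[t] 𝒜 := by
    refine union_subset ((shadow_monotone.iterate t) (filter_subset _ _)) fun U hU ↦ ?_
    obtain ⟨T, hT, rfl⟩ := mem_image.1 hU
    obtain ⟨S, hS, hTS, hcard⟩ := mem_shadow_iterate_iff_exists_sdiff.1 hT
    rw [mem_memberSubfamily] at hS
    refine mem_shadow_iterate_iff_exists_sdiff.2 ⟨insert a S, hS.1, insert_subset_insert a hTS, ?_⟩
    rwa [insert_sdiff_insert, sdiff_insert_of_notMem hS.2]
  have hinj : Set.InjOn (insert a) (ℳ : Set (Finset α)) := by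
    intro T hT T' hT' h
    rw [← erase_insert (hmem T hT), ← erase_insert (hmem T' hT'), h]
  calc #𝒩 + #ℳ = #(𝒩 ∪ ℳ.image (insert a)) := by
        rw [card_union_of_disjoint hdisj, card_image_of_injOn hinj]
    _ ≤ #(∂^[t] 𝒜) := card_le_card hsub

end Subfamily

namespace Finset.Colex

variable {α : Type*} [LinearOrder α] {r : ℕ}

theorem IsInitSeg.subset_of_card_le {𝒜 ℬ : Finset (Finset α)} (h𝒜 : IsInitSeg 𝒜 r)
    (hℬ : IsInitSeg ℬ r) (h : #𝒜 ≤ #ℬ) : 𝒜 ⊆ ℬ := by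
  rcases h𝒜.total hℬ with h' | h'
  · exact h'
  · exact (eq_of_subset_of_card_le h' h).ge

theorem isInitSeg_powersetCard_Iio [LocallyFiniteOrderBot α] (x : α) :
    IsInitSeg (powersetCard r (Iio x)) r := by
  refine ⟨Set.sized_powersetCard _ _, fun S T hS ⟨hTS, hT⟩ ↦ mem_powersetCard.2 ⟨?_, hT⟩⟩
  intro y hy
  rw [mem_Iio]
  exact forall_lt_mono hTS.le (fun z hz ↦ mem_Iio.1 ((mem_powersetCard.1 hS).1 hz)) y hy

theorem isInitSeg_powersetCard_Iic [LocallyFiniteOrderBot α] (x : α) :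
    IsInitSeg (powersetCard r (Iic x)) r := by
  refine ⟨Set.sized_powersetCard _ _, fun S T hS ⟨hTS, hT⟩ ↦ mem_powersetCard.2 ⟨?_, hT⟩⟩
  intro y hy
  rw [mem_Iic]
  exact forall_le_mono hTS.le (fun z hz ↦ mem_Iic.1 ((mem_powersetCard.1 hS).1 hz)) y hy

theorem exists_isInitSeg_card_eq [Fintype α] {N : ℕ} (hN : N ≤ (Fintype.card α).choose r) :
    ∃ 𝒞 : Finset (Finset α), IsInitSeg 𝒞 r ∧ #𝒞 = N := by
  induction N with
  | zero => exact ⟨∅, isInitSeg_empty, card_empty⟩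
  | succ N ih =>
    obtain ⟨𝒞, h𝒞, rfl⟩ := ih (by omega)
    have hne : (powersetCard r univ \ 𝒞).Nonempty := sdiff_nonempty.2 fun h ↦ by
      have := card_le_card h
      rw [card_powersetCard, card_univ] at this
      omega
    obtain ⟨S, hS, hmin⟩ := exists_min_image _ toColex hne
    refine ⟨insert S 𝒞, ⟨?_, ?_⟩, card_insert_of_notMem (mem_sdiff.1 hS).2⟩
    · intro X hX
      rw [coe_insert, Set.mem_insert_iff] at hX
      rcases hX with rfl | hX
      exacts [(mem_powersetCard.1 (mem_sdiff.1 hS).1).2, h𝒞.1 hX]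
    · rintro X T hX ⟨hTX, hT⟩
      rcases mem_insert.1 hX with rfl | hX
      · by_contra hT𝒞
        refine (hmin T (mem_sdiff.2 ⟨mem_powersetCard.2 ⟨subset_univ T, hT⟩, ?_⟩)).not_gt hTX
        exact fun h ↦ hT𝒞 (mem_insert_of_mem h)
      · exact mem_insert_of_mem (h𝒞.2 hX ⟨hTX, hT⟩)

end Finset.Colex

section Intervals

variable {α : Type*} [LinearOrder α] [LocallyFiniteOrderBot α] {r : ℕ} {x : α}
  {𝒞 : Finset (Finset α)}

theorem memberSubfamily_subset_powersetCard_Iio (h : 𝒞 ⊆ powersetCard r (Iic x)) :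
    𝒞.memberSubfamily x ⊆ powersetCard (r - 1) (Iio x) := fun S hS ↦ by
  rw [mem_memberSubfamily] at hS
  have hS' := mem_powersetCard.1 (h hS.1)
  rw [card_insert_of_notMem hS.2] at hS'
  rw [mem_powersetCard, ← Iic_erase, subset_erase]
  exact ⟨⟨(subset_insert x S).trans hS'.1, hS.2⟩, by omega⟩

theorem nonMemberSubfamily_eq_powersetCard_Iio (hlow : powersetCard r (Iio x) ⊆ 𝒞)
    (hup : 𝒞 ⊆ powersetCard r (Iic x)) : 𝒞.nonMemberSubfamily x = powersetCard r (Iio x) := by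
  ext S
  rw [mem_nonMemberSubfamily, mem_powersetCard, ← Iic_erase, subset_erase]
  constructor
  · rintro ⟨hS, hxS⟩
    have := mem_powersetCard.1 (hup hS)
    exact ⟨⟨this.1, hxS⟩, this.2⟩
  · rintro ⟨⟨hS, hxS⟩, hSr⟩
    refine ⟨hlow (mem_powersetCard.2 ⟨?_, hSr⟩), hxS⟩
    rw [← Iic_erase, subset_erase]
    exact ⟨hS, hxS⟩

end Intervals

section KruskalKatona

variable {n r s k K : ℕ} {𝒜 : Finset (Finset (Fin n))}

/-- The colex initial segment of size `#𝒜` consists of all `r`-subsets of `{0, …, K - 1}` and of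
`insert K S` for a proper nonempty family of `(r - 1)`-subsets `S` of `{0, …, K - 1}`; by the strict
local LYM inequality this second block has more sets in its shadow than members. -/
theorem lt_card_shadow_iterate_of_choose_lt_card (hsr : s < r) (hrK : r ≤ K) (hKn : K < n)
    (hK : K + 2 ≤ r + s) (h𝒜 : (𝒜 : Set (Finset (Fin n))).Sized r) (hlow : K.choose r < #𝒜)
    (hup : #𝒜 < (K + 1).choose r) : K.choose s + (#𝒜 - K.choose r) < #(∂^[r - s] 𝒜) := by
  obtain ⟨𝒞, h𝒞, h𝒞card⟩ :=
    exists_isInitSeg_card_eq (h𝒜.card_le.trans_eq (by rw [Fintype.card_fin]))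
  set x : Fin n := ⟨K, hKn⟩
  have hIio : #(Iio x) = K := Fin.card_Iio x
  have hlow𝒞 : powersetCard r (Iio x) ⊆ 𝒞 := (isInitSeg_powersetCard_Iio x).subset_of_card_le h𝒞
    (by rw [card_powersetCard, hIio, h𝒞card]; exact hlow.le)
  have hup𝒞 : 𝒞 ⊆ powersetCard r (Iic x) := h𝒞.subset_of_card_le (isInitSeg_powersetCard_Iic x)
    (by rw [card_powersetCard, Fin.card_Iic, h𝒞card]; exact hup.le)
  have hnon := nonMemberSubfamily_eq_powersetCard_Iio hlow𝒞 hup𝒞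
  have hmemcard : #(𝒞.memberSubfamily x) = #𝒜 - K.choose r := by
    have := card_memberSubfamily_add_card_nonMemberSubfamily x 𝒞
    rw [hnon, card_powersetCard, hIio] at this
    omega
  have hmem : 𝒞.memberSubfamily x ⊂ powersetCard (r - 1) (Iio x) := by
    refine ssubset_of_subset_of_ne (memberSubfamily_subset_powersetCard_Iio hup𝒞) fun h ↦ ?_
    have hpascal : (K + 1).choose r = K.choose (r - 1) + K.choose r := by
      obtain ⟨r', rfl⟩ := Nat.exists_eq_add_one_of_ne_zero (by omega : r ≠ 0)
      simp [Nat.choose_succ_succ']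
    have := congrArg card h
    rw [hmemcard, card_powersetCard, hIio] at this
    omega
  have hnon_shadow : K.choose s ≤ #(∂^[r - s] (𝒞.nonMemberSubfamily x)) := by
    have := kruskal_katona_lovasz_form (i := r - s) (by omega) hrK hKn.le
      (Set.sized_powersetCard (Iio x) r) (by rw [card_powersetCard, hIio])
    rwa [Nat.sub_sub_self hsr.le, ← hnon] at this
  have hmem_shadow : #(𝒞.memberSubfamily x) < #(∂^[r - s] (𝒞.memberSubfamily x)) :=
    card_lt_card_shadow_iterate hmem (card_pos.1 (by omega)) (by omega) (by omega)
      (by rw [hIio]; omega)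
  calc K.choose s + (#𝒜 - K.choose r)
      < #(∂^[r - s] (𝒞.nonMemberSubfamily x)) + #(∂^[r - s] (𝒞.memberSubfamily x)) := by omega
    _ ≤ #(∂^[r - s] 𝒞) :=
      card_shadow_iterate_nonMemberSubfamily_add_card_shadow_iterate_memberSubfamily_le _ _ _
    _ ≤ #(∂^[r - s] 𝒜) := iterated_kk h𝒜 h𝒞card.le h𝒞

theorem sub_choose_add_choose_le_card_shadow_iterate (hsr : s < r) (hrk : r ≤ k) (hkn : k ≤ n)
    (hn : n + 1 ≤ r + s) (h𝒜 : (𝒜 : Set (Finset (Fin n))).Sized r) (hk : k.choose r ≤ #𝒜) :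
    (#𝒜 : ℤ) - k.choose r + k.choose s ≤ #(∂^[r - s] 𝒜) ∧
      (k.choose r < #𝒜 → k + 3 ≤ r + s ∨ #𝒜 < n.choose r →
        (#𝒜 : ℤ) - k.choose r + k.choose s < #(∂^[r - s] 𝒜)) := by
  obtain ⟨K, hkK, hKn, hK, hKsucc⟩ := Nat.exists_choose_le_lt_choose_succ hkn hk
  have hg : (K.choose r : ℤ) - K.choose s ≤ k.choose r - k.choose s :=
    antitoneOn_choose_sub_choose hsr.le ⟨hrk, by omega⟩ ⟨by omega, by omega⟩ hkK
  rcases hK.lt_or_eq with hlt | heq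
  · have hKn' : K < n := hKn.lt_of_ne fun h ↦ by
      have := h𝒜.card_le
      rw [Fintype.card_fin] at this
      subst h
      omega
    have := lt_card_shadow_iterate_of_choose_lt_card hsr (hrk.trans hkK) hKn' (by omega) h𝒜 hlt
      (hKsucc hKn')
    have : (K.choose s : ℤ) + (#𝒜 - K.choose r) < #(∂^[r - s] 𝒜) := by
      rw [← Nat.cast_sub hlt.le]
      exact_mod_cast this
    exact ⟨by linarith, fun _ _ ↦ by linarith⟩
  · have hL := kruskal_katona_lovasz_form (i := r - s) (by omega) (hrk.trans hkK) hKn h𝒜 heq.le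
    rw [Nat.sub_sub_self hsr.le] at hL
    rw [← heq]
    refine ⟨by linarith, fun hk' hexc ↦ ?_⟩
    have hkK' : k < K := hkK.lt_of_ne (by rintro rfl; omega)
    have hk3 : k + 3 ≤ r + s := by
      rcases hexc with h | h
      · exact h
      · have : K < n := hKn.lt_of_ne (by rintro rfl; omega)
        omega
    linarith [choose_sub_choose_lt_of_lt hsr hrk hkK' (by omega) hk3]

end KruskalKatona

section CrossIntersecting

variable {α : Type*} [DecidableEq α] [Fintype α] {𝒜 ℬ : Finset (Finset α)}

theorem disjoint_shadow_iterate_compls (h : ∀ X ∈ 𝒜, ∀ Y ∈ ℬ, (X ∩ Y).Nonempty) (t : ℕ) :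
    Disjoint 𝒜 (∂^[t] ℬᶜˢ) := by
  refine disjoint_left.2 fun X hX hX' ↦ ?_
  obtain ⟨Z, hZ, hXZ, -⟩ := mem_shadow_iterate_iff_exists_sdiff.1 hX'
  obtain ⟨y, hy⟩ := h X hX Zᶜ (mem_compls.1 hZ)
  rw [mem_inter, mem_compl] at hy
  exact hy.2 (hXZ hy.1)

theorem card_add_card_shadow_iterate_compls_le {a b : ℕ} (h𝒜 : (𝒜 : Set (Finset α)).Sized a)
    (hℬ : (ℬ : Set (Finset α)).Sized b) (hab : a + b ≤ Fintype.card α)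
    (h : ∀ X ∈ 𝒜, ∀ Y ∈ ℬ, (X ∩ Y).Nonempty) :
    #𝒜 + #(∂^[Fintype.card α - b - a] ℬᶜˢ) ≤ (Fintype.card α).choose a := by
  rw [← card_union_of_disjoint (disjoint_shadow_iterate_compls h _)]
  refine Set.Sized.card_le ?_
  rw [coe_union, Set.sized_union]
  refine ⟨h𝒜, ?_⟩
  convert hℬ.compls.shadow_iterate using 1
  omega

end CrossIntersecting

theorem exists_sized_map_eq_of_subset_powersetCard_Icc {n m : ℕ} {A : Finset (Finset ℕ)}
    (hA : A ⊆ powersetCard m (Icc 1 n)) :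
    ∃ 𝒜 : Finset (Finset (Fin n)), (𝒜 : Set (Finset (Fin n))).Sized m ∧
      A = 𝒜.map (mapEmbedding (Fin.valEmbedding.trans (addRightEmbedding 1))).toEmbedding := by
  have hIcc :
      Icc 1 n = (univ : Finset (Fin n)).map (Fin.valEmbedding.trans (addRightEmbedding 1)) := by
    ext x
    simp only [mem_Icc, mem_map, mem_univ, true_and, Function.Embedding.trans_apply,
      Fin.valEmbedding_apply, addRightEmbedding_apply]
    exact ⟨fun h ↦ ⟨⟨x - 1, by omega⟩, by simp only; omega⟩, fun ⟨i, hi⟩ ↦ by omega⟩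
  rw [hIcc, powersetCard_map] at hA
  obtain ⟨𝒜, h𝒜, rfl⟩ := subset_map_iff.1 hA
  exact ⟨𝒜, fun X hX ↦ (mem_powersetCard.1 (h𝒜 hX)).2, rfl⟩

theorem stmt13_general (n a b j : ℕ) (hba : b < a) (hn : a + b < n)
    (A B : Finset (Finset ℕ))
    (hA : A ⊆ Finset.powersetCard a (Finset.Icc 1 n))
    (hB : B ⊆ Finset.powersetCard b (Finset.Icc 1 n))
    (hcross : CrossIntersecting A B)
    (hj1 : 1 ≤ j) (hjb : j ≤ b)
    (hBlow : (n - j).choose (b - j) ≤ B.card) :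
    (A.card : ℤ) + (B.card : ℤ) ≤
      (n.choose a : ℤ) + ((n - j).choose (b - j) : ℤ) - ((n - j).choose a : ℤ) ∧
    ((n - j).choose (b - j) < B.card →
      ¬(a = b + 1 ∧ j = 1 ∧ B.card = n.choose b) →
        (A.card : ℤ) + (B.card : ℤ) <
          (n.choose a : ℤ) + ((n - j).choose (b - j) : ℤ) - ((n - j).choose a : ℤ)) := by
  obtain ⟨𝒜, h𝒜, rfl⟩ := exists_sized_map_eq_of_subset_powersetCard_Icc hA
  obtain ⟨ℬ, hℬ, rfl⟩ := exists_sized_map_eq_of_subset_powersetCard_Icc hB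
  have hcross' : ∀ X ∈ 𝒜, ∀ Y ∈ ℬ, (X ∩ Y).Nonempty := fun X hX Y hY ↦ by
    have := hcross _ (mem_map_of_mem _ hX) _ (mem_map_of_mem _ hY)
    rwa [RelEmbedding.coe_toEmbedding, mapEmbedding_apply, mapEmbedding_apply, ← map_inter,
      map_nonempty] at this
  rw [card_map] at hBlow ⊢
  rw [card_map]
  have hA' := card_add_card_shadow_iterate_compls_le h𝒜 hℬ (by rw [Fintype.card_fin]; omega) hcross'
  rw [Fintype.card_fin] at hA'
  have hsymm : (n - j).choose (n - b) = (n - j).choose (b - j) :=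
    Nat.choose_symm_of_eq_add (by omega)
  obtain ⟨hle, hlt⟩ := sub_choose_add_choose_le_card_shadow_iterate (n := n) (𝒜 := ℬᶜˢ)
    (r := n - b) (s := a) (k := n - j) (by omega) (by omega) (by omega) (by omega)
    (by simpa using hℬ.compls) (by rwa [card_compls, hsymm])
  rw [card_compls, hsymm] at hle hlt
  refine ⟨by linarith, fun hBj hexc ↦ ?_⟩
  have hBn : #ℬ ≤ n.choose b := hℬ.card_le.trans_eq (by rw [Fintype.card_fin])
  linarith [hlt hBj (by rw [Nat.choose_symm (by omega : b ≤ n)]; omega)]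

theorem stmt13 (n a b j : ℕ) (hb : 0 < b) (hba : b < a) (hn : a + b < n)
    (A B : Finset (Finset ℕ))
    (hA : A ⊆ Finset.powersetCard a (Finset.Icc 1 n))
    (hB : B ⊆ Finset.powersetCard b (Finset.Icc 1 n))
    (hcross : CrossIntersecting A B)
    (hj1 : 1 ≤ j) (hjb : j ≤ b)
    (hBlow : (n - j).choose (b - j) ≤ B.card) :
    (A.card : ℤ) + (B.card : ℤ) ≤
      (n.choose a : ℤ) + ((n - j).choose (b - j) : ℤ) - ((n - j).choose a : ℤ) ∧
    ((n - j).choose (b - j) < B.card →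
      ¬(a = b + 1 ∧ j = 1 ∧ B.card = n.choose b) →
        (A.card : ℤ) + (B.card : ℤ) <
          (n.choose a : ℤ) + ((n - j).choose (b - j) : ℤ) - ((n - j).choose a : ℤ)) :=
  stmt13_general n a b j hba hn A B hA hB hcross hj1 hjb hBlow
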